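/- Every κ-Borel subset of 2^κ has the Property of Baire: there exists an open set U such that the symmetric difference of U and the Borel set is κ-meager. -/

import Mathlib

/-!
The sets differing from an open set by a union of `I`-many nowhere dense sets contain the open
sets and are closed under complements and `I`-indexed intersections, hence contain every
κ-Borel set. For complements, if `U` approximates `s` then `interior Uᶜ` approximates `sᶜ`,
at the extra cost of the closed nowhere dense set `frontier Uᶜ`. For intersections, an
`I × I`-indexed family of nowhere dense sets is reindexed by `I` through a bijection
`I ≃ I × I`, which exists since `I` is infinite.
-/

open Set

universe u

namespace GDST

def KS (I : Type u) : Type u := I → I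
def CS (I : Type u) : Type u := I → Bool

def kBasic {I : Type u} [LT I] (ζ : I → I) (β : I) : Set (KS I) :=
  {η : KS I | ∀ α : I, α < β → η α = ζ α}

def cBasic {I : Type u} [LT I] (ζ : I → Bool) (β : I) : Set (CS I) :=
  {η : CS I | ∀ α : I, α < β → η α = ζ α}

instance kTop {I : Type u} [LT I] : TopologicalSpace (KS I) :=
  TopologicalSpace.generateFrom {U | ∃ ζ β, U = kBasic ζ β}

instance cTop {I : Type u} [LT I] : TopologicalSpace (CS I) :=
  TopologicalSpace.generateFrom {U | ∃ ζ β, U = cBasic ζ β}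
/-- κ-Borel subsets of `2^κ`: smallest family containing the basic open sets and closed
under complements and intersections of size `≤ κ` (indexed by `I`, of cardinality `κ`). -/
inductive IsCBorel {I : Type u} [LT I] : Set (CS I) → Prop
  | basic (ζ : I → Bool) (β : I) : IsCBorel (cBasic ζ β)
  | compl {s : Set (CS I)} : IsCBorel s → IsCBorel sᶜ
  | iInter {s : I → Set (CS I)} : (∀ i, IsCBorel (s i)) → IsCBorel (⋂ i, s i)

end GDST

open scoped symmDiff

section BaireProperty

variable {X : Type*} [TopologicalSpace X] {ι : Type*}

lemma IsNowhereDense.union {s t : Set X} (hs : IsNowhereDense s) (ht : IsNowhereDense t) :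
    IsNowhereDense (s ∪ t) := by
  rw [IsNowhereDense, closure_union,
    interior_union_isClosed_of_interior_empty isClosed_closure ht]
  exact hs

lemma IsClosed.isNowhereDense_frontier {s : Set X} (hs : IsClosed s) :
    IsNowhereDense (frontier s) := by
  rw [IsNowhereDense, isClosed_frontier.closure_eq, interior_frontier hs]

variable (ι) in
def IsMeagerBy (s : Set X) : Prop :=
  ∃ A : ι → Set X, (∀ i, IsNowhereDense (A i)) ∧ s ⊆ ⋃ i, A i

lemma isMeagerBy_empty : IsMeagerBy ι (∅ : Set X) :=
  ⟨fun _ => ∅, fun _ => isNowhereDense_empty, empty_subset _⟩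

lemma IsNowhereDense.isMeagerBy [Nonempty ι] {s : Set X} (hs : IsNowhereDense s) :
    IsMeagerBy ι s :=
  ⟨fun _ => s, fun _ => hs, subset_iUnion_of_subset (Classical.arbitrary ι) subset_rfl⟩

lemma IsMeagerBy.mono {s t : Set X} (ht : IsMeagerBy ι t) (hst : s ⊆ t) : IsMeagerBy ι s :=
  let ⟨A, hA, htA⟩ := ht
  ⟨A, hA, hst.trans htA⟩

lemma IsMeagerBy.union {s t : Set X} (hs : IsMeagerBy ι s) (ht : IsMeagerBy ι t) :
    IsMeagerBy ι (s ∪ t) := by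
  obtain ⟨A, hA, hsA⟩ := hs
  obtain ⟨B, hB, htB⟩ := ht
  refine ⟨fun i => A i ∪ B i, fun i => (hA i).union (hB i), ?_⟩
  rw [iUnion_union_distrib]
  exact union_subset_union hsA htB

lemma IsMeagerBy.iUnion {J : Type*} (e : ι ≃ J × ι) {s : J → Set X}
    (hs : ∀ j, IsMeagerBy ι (s j)) : IsMeagerBy ι (⋃ j, s j) := by
  choose A hA hsA using hs
  refine ⟨fun i => A (e i).1 (e i).2, fun i => hA _ _, iUnion_subset fun j => ?_⟩
  refine (hsA j).trans (iUnion_subset fun k => ?_)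
  exact subset_iUnion_of_subset (e.symm (j, k)) (by simp)

variable (ι) in
def HasBaireProperty (s : Set X) : Prop :=
  ∃ U : Set X, IsOpen U ∧ IsMeagerBy ι (U ∆ s)

lemma IsOpen.hasBaireProperty {s : Set X} (hs : IsOpen s) : HasBaireProperty ι s :=
  ⟨s, hs, by rw [symmDiff_self]; exact isMeagerBy_empty⟩

lemma HasBaireProperty.compl [Nonempty ι] {s : Set X} (hs : HasBaireProperty ι s) :
    HasBaireProperty ι sᶜ := by
  obtain ⟨U, hU, hUs⟩ := hs
  refine ⟨interior Uᶜ, isOpen_interior, ?_⟩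
  have hfrontier : interior Uᶜ ∆ Uᶜ = frontier Uᶜ := by
    rw [symmDiff_of_le interior_subset, ← closure_sdiff_interior, hU.isClosed_compl.closure_eq]
  refine IsMeagerBy.mono ?_ (symmDiff_triangle _ Uᶜ _)
  rw [hfrontier, compl_symmDiff_compl]
  exact hU.isClosed_compl.isNowhereDense_frontier.isMeagerBy.union hUs

lemma HasBaireProperty.iUnion {J : Type*} (e : ι ≃ J × ι) {s : J → Set X}
    (hs : ∀ j, HasBaireProperty ι (s j)) : HasBaireProperty ι (⋃ j, s j) := by
  choose U hU hUs using hs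
  exact ⟨⋃ j, U j, isOpen_iUnion hU,
    (IsMeagerBy.iUnion e hUs).mono iUnion_symmDiff_iUnion_subset⟩

lemma HasBaireProperty.iInter [Nonempty ι] {J : Type*} (e : ι ≃ J × ι) {s : J → Set X}
    (hs : ∀ j, HasBaireProperty ι (s j)) : HasBaireProperty ι (⋂ j, s j) := by
  have h := HasBaireProperty.iUnion e fun j => (hs j).compl
  rw [← compl_iInter] at h
  simpa only [compl_compl] using h.compl

end BaireProperty

namespace GDST

lemma IsCBorel.hasBaireProperty {I : Type*} [LT I] [Infinite I] {B : Set (CS I)}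
    (hB : IsCBorel B) : HasBaireProperty I B := by
  obtain ⟨e⟩ : Nonempty (I ≃ I × I) :=
    Cardinal.eq.mp (Cardinal.mul_eq_self (Cardinal.infinite_iff.mp ‹_›)).symm
  induction hB with
  | basic ζ β => exact IsOpen.hasBaireProperty (.basic _ ⟨ζ, β, rfl⟩)
  | compl _ ih => exact ih.compl
  | iInter _ ih => exact HasBaireProperty.iInter e ih

theorem stmt12_general (κ : Cardinal) (hunc : Cardinal.aleph0 < κ)
    (I : Type) [LinearOrder I] (hI : Cardinal.mk I = κ)
    (B : Set (CS I)) (hB : IsCBorel B) :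
    ∃ U : Set (CS I), IsOpen U ∧
      ∃ A : I → Set (CS I), (∀ i, interior (closure (A i)) = ∅) ∧
        symmDiff U B ⊆ ⋃ i, A i := by
  have : Infinite I := Cardinal.infinite_iff.mpr (hI ▸ hunc.le)
  exact hB.hasBaireProperty

/-- every κ-Borel subset of `2^κ` has the Property of Baire: it differs from
an open set by a κ-meager set (a union of at most `κ` nowhere dense sets, indexed by `I`). -/
theorem stmt12 (κ : Cardinal) (hreg : κ.IsRegular) (hunc : Cardinal.aleph0 < κ)
    (I : Type) [LinearOrder I] [WellFoundedLT I] (hI : Cardinal.mk I = κ)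
    (hseg : ∀ i : I, Cardinal.mk {j : I // j < i} < κ)
    (B : Set (CS I)) (hB : IsCBorel B) :
    ∃ U : Set (CS I), IsOpen U ∧
      ∃ A : I → Set (CS I), (∀ i, interior (closure (A i)) = ∅) ∧
        symmDiff U B ⊆ ⋃ i, A i :=
  stmt12_general κ hunc I hI B hB

end GDST
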